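/- The graph G_1 obtained from the 5-cycle by replacing each vertex with a triangle (with complete bipartite joins between consecutive triangles) satisfies Δ(G_1) = 8, ω(G_1) = 6, and χ(G_1) = 8. -/

import Mathlib

open SimpleGraph

/-- Maximum degree of a finite graph. -/
noncomputable def maxDeg {V : Type*} [Fintype V] (G : SimpleGraph V) : ℕ :=
  Finset.univ.sup fun v => (G.neighborSet v).ncard

/-- The graph `G₁`: five triangles arranged in a cycle, with complete bipartite
joins between consecutive triangles.  Vertex `(i, a)` lies in the `i`-th triangle. -/
def G1 : SimpleGraph (Fin 5 × Fin 3) where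
  Adj x y := x ≠ y ∧ (x.1 = y.1 ∨ x.1 = y.1 + 1 ∨ y.1 = x.1 + 1)
  symm := by
    constructor
    rintro x y ⟨hne, h⟩
    exact ⟨hne.symm, by tauto⟩
  loopless := by constructor; rintro x ⟨hne, -⟩; exact hne rfl

/-!
Every vertex is adjacent to the two other vertices of its triangle and to the six vertices of the
two neighbouring triangles. Projecting a clique or an independent set of `G1` onto the index of its
triangles gives a clique or an independent set of the 5-cycle, which has at most two vertices.
Hence a clique has at most `2 * 3 = 6` vertices (attained by `T₀ ∪ T₁`), and an independent set
meets each triangle at most once, so it has at most two vertices; thus `χ ≥ 15 / 2`, and an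
explicit colouring shows `χ ≤ 8`.
-/

open Finset

namespace SimpleGraph

variable {V : Type*} [Fintype V] {G : SimpleGraph V}

lemma ncard_neighborSet_eq_degree [DecidableRel G.Adj] (v : V) :
    (G.neighborSet v).ncard = G.degree v := by
  rw [Set.ncard_eq_toFinset_card']
  rfl

lemma maxDeg_eq_of_isRegularOfDegree [Nonempty V] [DecidableRel G.Adj] {d : ℕ}
    (hG : G.IsRegularOfDegree d) : maxDeg G = d := by
  simp only [maxDeg, ncard_neighborSet_eq_degree, hG.degree_eq]
  exact sup_const univ_nonempty d

lemma card_le_indepNum_mul_of_colorable {n : ℕ} (hG : G.Colorable n) :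
    Fintype.card V ≤ G.indepNum * n := by
  obtain ⟨C⟩ := hG
  have hclass : ∀ c ∈ (univ : Finset (Fin n)), #{v | C v = c} ≤ G.indepNum := fun c _ =>
    IsIndepSet.card_le_indepNum <| by simpa [Coloring.colorClass] using C.isIndepSet_colorClass c
  simpa using card_le_mul_card_image_of_maps_to (fun v _ => mem_univ (C v)) _ hclass

end SimpleGraph

open SimpleGraph

instance : DecidableRel G1.Adj := fun _ _ => inferInstanceAs (Decidable (_ ∧ _))

lemma G1_adj_iff {x y : Fin 5 × Fin 3} :
    G1.Adj x y ↔ x ≠ y ∧ (x.1 = y.1 ∨ (cycleGraph 5).Adj x.1 y.1) := by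
  revert x y
  decide

lemma cycleGraph_five_card_le_two_of_isClique {t : Finset (Fin 5)}
    (ht : (cycleGraph 5).IsClique (t : Set (Fin 5))) : #t ≤ 2 := by
  revert t
  decide

lemma cycleGraph_five_card_le_two_of_isIndepSet {t : Finset (Fin 5)}
    (ht : (cycleGraph 5).IsIndepSet (t : Set (Fin 5))) : #t ≤ 2 := by
  revert t
  decide

namespace G1

variable {s : Finset (Fin 5 × Fin 3)}

lemma isRegularOfDegree : G1.IsRegularOfDegree 8 := by
  unfold IsRegularOfDegree
  decide

lemma isClique_image_fst (hs : G1.IsClique (s : Set (Fin 5 × Fin 3))) :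
    (cycleGraph 5).IsClique (s.image Prod.fst : Set (Fin 5)) := by
  rintro _ hi _ hj hij
  obtain ⟨x, hx, rfl⟩ := mem_image.1 hi
  obtain ⟨y, hy, rfl⟩ := mem_image.1 hj
  exact (G1_adj_iff.1 (hs hx hy (ne_of_apply_ne _ hij))).2.resolve_left hij

lemma isIndepSet_image_fst (hs : G1.IsIndepSet (s : Set (Fin 5 × Fin 3))) :
    (cycleGraph 5).IsIndepSet (s.image Prod.fst : Set (Fin 5)) := by
  rintro _ hi _ hj hij hadj
  obtain ⟨x, hx, rfl⟩ := mem_image.1 hi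
  obtain ⟨y, hy, rfl⟩ := mem_image.1 hj
  have hxy : x ≠ y := ne_of_apply_ne _ hij
  exact hs hx hy hxy (G1_adj_iff.2 ⟨hxy, Or.inr hadj⟩)

lemma injOn_fst_of_isIndepSet (hs : G1.IsIndepSet (s : Set (Fin 5 × Fin 3))) :
    Set.InjOn Prod.fst (s : Set (Fin 5 × Fin 3)) := by
  intro x hx y hy hxy
  by_contra hne
  exact hs hx hy hne (G1_adj_iff.2 ⟨hne, Or.inl hxy⟩)

lemma card_le_six_of_isClique (hs : G1.IsClique (s : Set (Fin 5 × Fin 3))) : #s ≤ 6 :=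
  calc #s ≤ #(s.image Prod.fst ×ˢ s.image Prod.snd) := card_le_card subset_product
    _ = #(s.image Prod.fst) * #(s.image Prod.snd) := card_product _ _
    _ ≤ 2 * 3 := Nat.mul_le_mul
      (cycleGraph_five_card_le_two_of_isClique (isClique_image_fst hs)) (card_le_univ _)

lemma card_le_two_of_isIndepSet (hs : G1.IsIndepSet (s : Set (Fin 5 × Fin 3))) : #s ≤ 2 := by
  rw [← card_image_of_injOn (injOn_fst_of_isIndepSet hs)]
  exact cycleGraph_five_card_le_two_of_isIndepSet (isIndepSet_image_fst hs)

lemma cliqueNum_eq : G1.cliqueNum = 6 := by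
  apply le_antisymm
  · obtain ⟨s, hs⟩ := G1.exists_isNClique_cliqueNum
    exact hs.2 ▸ card_le_six_of_isClique hs.1
  · have hT : G1.IsNClique 6 (({0, 1} : Finset (Fin 5)) ×ˢ univ) := by decide
    exact hT.2 ▸ IsClique.card_le_cliqueNum (tc := hT.1)

lemma indepNum_le : G1.indepNum ≤ 2 := by
  obtain ⟨s, hs⟩ := G1.exists_isNIndepSet_indepNum
  exact hs.2 ▸ card_le_two_of_isIndepSet hs.1

-- Colour classes: pairs of vertices in non-consecutive triangles, and the singleton class `7`.
def coloring : G1.Coloring (Fin 8) :=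
  Coloring.mk (fun x => ![![0, 1, 2], ![3, 4, 5], ![0, 1, 6], ![2, 3, 7], ![4, 5, 6]] x.1 x.2) <| by
    intro x y
    revert x y
    decide

lemma chromaticNumber_eq : G1.chromaticNumber = 8 := by
  apply le_antisymm (Colorable.chromaticNumber_le ⟨coloring⟩)
  refine le_chromaticNumber_iff_colorable.2 fun m hm => ?_
  have h : 15 ≤ 2 * m := by
    simpa using (card_le_indepNum_mul_of_colorable hm).trans (Nat.mul_le_mul_right m indepNum_le)
  exact_mod_cast (by omega : 8 ≤ m)

end G1

theorem stmt9 : maxDeg G1 = 8 ∧ G1.cliqueNum = 6 ∧ G1.chromaticNumber = 8 :=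
  ⟨maxDeg_eq_of_isRegularOfDegree G1.isRegularOfDegree, G1.cliqueNum_eq, G1.chromaticNumber_eq⟩
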